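/- Interpolation in weighted Sobolev spaces: for every f ∈ C₀^∞(ℝ) and integer K ≥ 0, ‖f‖²_{H^{4,K}} ≲ ‖f‖_{H^{1,K}} ‖f‖_{H^{7,K}}, where ‖f‖_{H^{N,K}} = Σ_{k=0}^{K} Σ_{n=0}^{2(K−k)+N} ‖⟨y⟩^k ∂_y^n f‖_{L²}. -/
import Mathlib


open Real Set MeasureTheory Finset

/-- The `L²(ℝ)` norm. -/
noncomputable def L2norm (f : ℝ → ℝ) : ℝ := Real.sqrt (∫ y : ℝ, (f y) ^ 2)

/-- The weighted Sobolev norm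
`‖f‖_{H^{N,K}} = Σ_{k=0}^{K} Σ_{n=0}^{2(K−k)+N} ‖⟨y⟩^k ∂_y^n f‖_{L²}` with `⟨y⟩ = (1+y²)^{1/2}`. -/
noncomputable def sobNorm (N K : ℕ) (f : ℝ → ℝ) : ℝ :=
  ∑ k ∈ Finset.range (K + 1), ∑ n ∈ Finset.range (2 * (K - k) + N + 1),
    L2norm (fun y => (1 + y ^ 2) ^ ((k : ℝ) / 2) * iteratedDeriv n f y)

noncomputable abbrev Pw (k : ℕ) : ℝ → ℝ := fun y => (1 + y ^ 2) ^ k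

lemma Pw_smooth (k : ℕ) : ContDiff ℝ (⊤ : ℕ∞) (Pw k) :=
  (contDiff_const.add (contDiff_id.pow 2)).pow k

lemma Pw_pos (k : ℕ) (y : ℝ) : 0 < Pw k y := by positivity

lemma ideriv_const_succ (c : ℝ) (j : ℕ) : iteratedDeriv (j+1) (fun _ : ℝ => c) = fun _ => 0 := by
  induction j with
  | zero => ext x; simp [iteratedDeriv_one]
  | succ j ih => rw [iteratedDeriv_succ, ih]; ext x; simp

lemma abs_y_le (y : ℝ) : |y| ≤ 1 + y ^ 2 := by
  rcases abs_cases y with ⟨h, _⟩ | ⟨h, _⟩ <;> nlinarith [sq_nonneg y, sq_nonneg (y-1), sq_nonneg (y+1)]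

lemma q_ideriv_bound (i : ℕ) (y : ℝ) :
    |iteratedDeriv i (fun y : ℝ => 1 + y ^ 2) y| ≤ 2 * (1 + y ^ 2) := by
  have hq : deriv (fun y : ℝ => 1 + y ^ 2) = fun y => 2 * y := by
    ext x; simpa using (((hasDerivAt_pow 2 x).const_add 1).deriv)
  match i with
  | 0 => simp only [iteratedDeriv_zero]
        ; rw [abs_of_nonneg (by positivity)]; nlinarith [sq_nonneg y]
  | 1 => rw [iteratedDeriv_one, hq]
         rw [abs_mul]
         have := abs_y_le y
         norm_num
         linarith
  | (i+2) =>
    have h2 : iteratedDeriv (i+2) (fun y : ℝ => 1 + y ^ 2)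
        = iteratedDeriv (i+1) (fun y : ℝ => 2 * y) := by
      rw [iteratedDeriv_succ']
      rw [hq]
    rw [h2]
    have hd : deriv (fun y : ℝ => 2 * y) = fun _ => (2:ℝ) := by
      ext x; simpa using ((hasDerivAt_id x).const_mul (2:ℝ)).deriv
    match i with
    | 0 => rw [iteratedDeriv_one, hd]
           have : |(2:ℝ)| = 2 := by norm_num
           show |(2:ℝ)| ≤ _
           rw [this]; nlinarith [sq_nonneg y]
    | (i+1) =>
      have : iteratedDeriv (i+1+1) (fun y : ℝ => 2*y) = iteratedDeriv (i+1) (fun _ : ℝ => (2:ℝ)) := by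
        rw [iteratedDeriv_succ', hd]
      rw [this, ideriv_const_succ]
      show |(0:ℝ)| ≤ _
      rw [abs_zero]; positivity

lemma Pw_ideriv_bound (k : ℕ) : ∀ j, j ≤ 3 → ∀ y, |iteratedDeriv j (Pw k) y| ≤ 16 ^ k * Pw k y := by
  induction k with
  | zero =>
    intro j _ y
    have h1 : Pw 0 = fun _ : ℝ => (1:ℝ) := by funext y; simp
    rw [h1]
    match j with
    | 0 => simp
    | (j+1) =>
      rw [ideriv_const_succ]
      show |(0:ℝ)| ≤ _
      rw [abs_zero]; positivity
  | succ k ih =>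
    intro j hj y
    have hPk : ContDiff ℝ (⊤ : ℕ∞) (Pw k) := Pw_smooth k
    have hq : ContDiff ℝ (⊤ : ℕ∞) (fun y : ℝ => 1 + y ^ 2) := contDiff_const.add (contDiff_id.pow 2)
    have hfun : Pw (k+1) = (fun y => (1 + y ^ 2) * Pw k y) := by
      funext y; show (1+y^2)^(k+1) = (1+y^2) * (1+y^2)^k; rw [pow_succ]; ring
    have heq : iteratedDeriv j (Pw (k+1)) = iteratedDeriv j (fun y => (1 + y ^ 2) * Pw k y) := by
      rw [hfun]
    have h2j : (2:ℝ) ^ j ≤ 8 := by interval_cases j <;> norm_num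
    rw [heq]
    calc |iteratedDeriv j (fun y => (1 + y ^ 2) * Pw k y) y|
        = ‖iteratedFDeriv ℝ j (fun y => (1 + y ^ 2) * Pw k y) y‖ := by
          rw [norm_iteratedFDeriv_eq_norm_iteratedDeriv, Real.norm_eq_abs]
      _ ≤ ∑ i ∈ Finset.range (j+1), (j.choose i : ℝ) * ‖iteratedFDeriv ℝ i (fun y : ℝ => 1 + y ^ 2) y‖
            * ‖iteratedFDeriv ℝ (j-i) (Pw k) y‖ := norm_iteratedFDeriv_mul_le hq hPk y (by exact_mod_cast le_top)
      _ ≤ ∑ i ∈ Finset.range (j+1), (j.choose i : ℝ) * (2 * (1 + y ^ 2)) * (16 ^ k * Pw k y) := by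
          apply Finset.sum_le_sum; intro i hi
          have h1 : ‖iteratedFDeriv ℝ i (fun y : ℝ => 1 + y ^ 2) y‖ ≤ 2 * (1 + y ^ 2) := by
            rw [norm_iteratedFDeriv_eq_norm_iteratedDeriv, Real.norm_eq_abs]
            exact q_ideriv_bound i y
          have h2 : ‖iteratedFDeriv ℝ (j-i) (Pw k) y‖ ≤ 16 ^ k * Pw k y := by
            rw [norm_iteratedFDeriv_eq_norm_iteratedDeriv, Real.norm_eq_abs]
            exact ih (j-i) (by omega) y
          exact mul_le_mul (mul_le_mul_of_nonneg_left h1 (by positivity)) h2 (norm_nonneg _)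
            (by positivity)
      _ = (∑ i ∈ Finset.range (j+1), (j.choose i : ℝ)) * ((2 * (1 + y ^ 2)) * (16 ^ k * Pw k y)) := by
          rw [Finset.sum_mul]; congr 1; funext i; ring
      _ = (2:ℝ) ^ j * ((2 * (1 + y ^ 2)) * (16 ^ k * Pw k y)) := by
          congr 1
          exact_mod_cast Nat.sum_range_choose j
      _ ≤ 8 * ((2 * (1 + y ^ 2)) * (16 ^ k * Pw k y)) := by
          have : (0:ℝ) ≤ (2 * (1 + y ^ 2)) * (16 ^ k * Pw k y) := by positivity
          exact mul_le_mul_of_nonneg_right h2j this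
      _ = 16 ^ (k+1) * ((1 + y ^ 2) * Pw k y) := by ring
      _ = 16 ^ (k+1) * Pw (k+1) y := by
          show _ = (16:ℝ)^(k+1) * (1+y^2)^(k+1)
          rw [pow_succ (1+y^2) k]; ring

lemma hcs_iter {f : ℝ → ℝ} (hf : HasCompactSupport f) (n : ℕ) :
    HasCompactSupport (iteratedDeriv n f) := by
  induction n with
  | zero => simpa using hf
  | succ n ih => rw [iteratedDeriv_succ]; exact ih.deriv

lemma smooth_iter {f : ℝ → ℝ} (hf : ContDiff ℝ (⊤:ℕ∞) f) (n : ℕ) :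
    ContDiff ℝ (⊤:ℕ∞) (iteratedDeriv n f) := by
  rw [iteratedDeriv_eq_iterate]; exact hf.iterate_deriv n

lemma ideriv_ideriv (f : ℝ → ℝ) (n : ℕ) :
    ∀ i, iteratedDeriv i (iteratedDeriv n f) = iteratedDeriv (n + i) f := by
  intro i
  induction i with
  | zero => simp
  | succ i ih => rw [iteratedDeriv_succ, ih, ← iteratedDeriv_succ]; ring_nf

lemma integral_deriv_zero (F : ℝ → ℝ) (hF : ContDiff ℝ 1 F) (h : HasCompactSupport F) :
    ∫ x, deriv F x = 0 := by
  have hc : Continuous (deriv F) := hF.continuous_deriv le_rfl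
  have hi : Integrable (deriv F) := hc.integrable_of_hasCompactSupport h.deriv
  rw [← intervalIntegral.integral_Iic_add_Ioi (b := 0) hi.integrableOn hi.integrableOn,
    HasCompactSupport.integral_Iic_deriv_eq hF h, HasCompactSupport.integral_Ioi_deriv_eq hF h]
  ring

lemma ibp_one (u v : ℝ → ℝ) (hu : ContDiff ℝ (⊤:ℕ∞) u) (hv : ContDiff ℝ (⊤:ℕ∞) v)
    (hcv : HasCompactSupport v) :
    ∫ x, u x * deriv v x = - ∫ x, deriv u x * v x := by
  have h1 : HasCompactSupport (fun x => u x * v x) := hcv.mul_left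
  have hd : ∀ x, deriv (fun x => u x * v x) x = deriv u x * v x + u x * deriv v x := fun x =>
    deriv_mul ((hu.differentiable (by norm_num)).differentiableAt)
      ((hv.differentiable (by norm_num)).differentiableAt)
  have hint : ∫ x, (deriv u x * v x + u x * deriv v x) = 0 := by
    rw [← integral_deriv_zero (fun x => u x * v x) ((hu.mul hv).of_le (by exact_mod_cast le_top)) h1]
    congr 1; funext x; rw [hd x]
  have i1 : Integrable (fun x => deriv u x * v x) :=
    ((hu.continuous_deriv (by exact_mod_cast le_top)).mul hv.continuous).integrable_of_hasCompactSupport hcv.mul_left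
  have i2 : Integrable (fun x => u x * deriv v x) :=
    (hu.continuous.mul (hv.continuous_deriv (by exact_mod_cast le_top))).integrable_of_hasCompactSupport
      hcv.deriv.mul_left
  rw [integral_add i1 i2] at hint
  linarith

lemma ibp_iter (f g : ℝ → ℝ) (hf : ContDiff ℝ (⊤:ℕ∞) f) (hsupp : HasCompactSupport f)
    (hg : ContDiff ℝ (⊤:ℕ∞) g) :
    ∀ d m, d ≤ m → ∫ x, g x * iteratedDeriv m f x
      = (-1:ℝ)^d * ∫ x, iteratedDeriv d g x * iteratedDeriv (m - d) f x := by
  intro d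
  induction d with
  | zero => intro m _; simp
  | succ d ih =>
    intro m hm
    rw [ih m (by omega)]
    have hs : m - d = (m - (d+1)) + 1 := by omega
    have h1 : ∫ x, iteratedDeriv d g x * iteratedDeriv (m - d) f x
        = - ∫ x, iteratedDeriv (d+1) g x * iteratedDeriv (m - (d+1)) f x := by
      rw [hs, iteratedDeriv_succ (n := m - (d+1))]
      rw [ibp_one (iteratedDeriv d g) (iteratedDeriv (m - (d+1)) f) (smooth_iter hg d)
        (smooth_iter hf _) (hcs_iter hsupp _)]
      rw [← iteratedDeriv_succ]
    rw [h1]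
    ring

lemma cs_integral (u v : ℝ → ℝ) (hu : Continuous u) (hv : Continuous v)
    (hcu : HasCompactSupport u) (hcv : HasCompactSupport v) :
    ∫ x, |u x * v x| ≤ Real.sqrt (∫ x, u x ^ 2) * Real.sqrt (∫ x, v x ^ 2) := by
  have hc2 : ∀ (w : ℝ → ℝ), Continuous w → HasCompactSupport w → Integrable (fun x => w x ^ 2) := by
    intro w hw hcw
    have : (fun x => w x ^ 2) = fun x => w x * w x := by funext x; ring
    rw [this]
    exact (hw.mul hw).integrable_of_hasCompactSupport hcw.mul_left
  have ia := hc2 u hu hcu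
  have ic := hc2 v hv hcv
  have iuv : Integrable (fun x => |u x * v x|) :=
    ((hu.mul hv).abs).integrable_of_hasCompactSupport hcv.mul_left.abs
  set a := ∫ x, u x ^ 2 with ha
  set c := ∫ x, v x ^ 2 with hc
  set b := 2 * ∫ x, |u x * v x| with hb
  have ha0 : 0 ≤ a := integral_nonneg fun x => sq_nonneg _
  have hc0 : 0 ≤ c := integral_nonneg fun x => sq_nonneg _
  have key : ∀ t : ℝ, 0 ≤ a * (t * t) + b * t + c := by
    intro t
    have expand : ∀ x, (t * |u x| + |v x|) ^ 2
        = t * t * u x ^ 2 + (2 * t) * |u x * v x| + v x ^ 2 := by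
      intro x
      have h1 : |u x| ^ 2 = u x ^ 2 := sq_abs _
      have h2 : |v x| ^ 2 = v x ^ 2 := sq_abs _
      have h3 : |u x * v x| = |u x| * |v x| := abs_mul _ _
      rw [h3, ← h1, ← h2]; ring
    have hnn : 0 ≤ ∫ x, (t * |u x| + |v x|) ^ 2 := integral_nonneg fun x => sq_nonneg _
    have heq : ∫ x, (t * |u x| + |v x|) ^ 2 = a * (t * t) + b * t + c := by
      have : (fun x => (t * |u x| + |v x|) ^ 2)
          = fun x => (t * t * u x ^ 2 + (2 * t) * |u x * v x|) + v x ^ 2 := by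
        funext x; rw [expand x]
      have iA : Integrable (fun x => t * t * u x ^ 2 + (2 * t) * |u x * v x|) :=
        (ia.const_mul _).add (iuv.const_mul _)
      calc ∫ x, (t * |u x| + |v x|) ^ 2
          = ∫ x, (t * t * u x ^ 2 + (2 * t) * |u x * v x|) + v x ^ 2 := by rw [this]
        _ = (∫ x, t * t * u x ^ 2 + (2 * t) * |u x * v x|) + ∫ x, v x ^ 2 :=
            integral_add iA ic
        _ = ((∫ x, t * t * u x ^ 2) + ∫ x, (2 * t) * |u x * v x|) + ∫ x, v x ^ 2 := by
            rw [integral_add (ia.const_mul _) (iuv.const_mul _)]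
        _ = (t * t * (∫ x, u x ^ 2) + (2 * t) * ∫ x, |u x * v x|) + ∫ x, v x ^ 2 := by
            rw [integral_const_mul, integral_const_mul]
        _ = a * (t * t) + b * t + c := by simp only [← ha, ← hb, ← hc]; ring
    rw [← heq]; exact hnn
  have hd : discrim a b c ≤ 0 := discrim_le_zero key
  rw [discrim] at hd
  have h2 : (∫ x, |u x * v x|) ^ 2 ≤ a * c := by rw [hb] at hd; nlinarith
  have h0 : 0 ≤ ∫ x, |u x * v x| := integral_nonneg fun x => abs_nonneg _
  calc ∫ x, |u x * v x| ≤ Real.sqrt (a * c) := by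
        rw [Real.le_sqrt h0 (by positivity)]; exact h2
    _ = Real.sqrt a * Real.sqrt c := Real.sqrt_mul ha0 _

lemma key_est (f : ℝ → ℝ) (hf : ContDiff ℝ (⊤:ℕ∞) f) (hsupp : HasCompactSupport f)
    (k n d : ℕ) (hd3 : d ≤ 3) (hdn : d ≤ n) :
    (∫ y, Pw k y * iteratedDeriv n f y ^ 2)
      ≤ ∑ j ∈ Finset.range (d+1), 8 * 16 ^ k *
          (Real.sqrt (∫ y, Pw k y * iteratedDeriv (n+d-j) f y ^ 2) *
           Real.sqrt (∫ y, Pw k y * iteratedDeriv (n-d) f y ^ 2)) := by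
  have hPc : Continuous (Pw k) := (Pw_smooth k).continuous
  have hgs : ContDiff ℝ (⊤:ℕ∞) (fun y => Pw k y * iteratedDeriv n f y) :=
    ((Pw_smooth k).of_le (by simp)).mul (smooth_iter hf n)
  have hsqc : Continuous (fun y => Real.sqrt (Pw k y)) := Real.continuous_sqrt.comp hPc
  -- step 1 : rewrite via iterated integration by parts
  have h1 : ∫ y, Pw k y * iteratedDeriv n f y ^ 2
      = (-1:ℝ)^d * ∫ y, iteratedDeriv d (fun y => Pw k y * iteratedDeriv n f y) y
          * iteratedDeriv (n-d) f y := by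
    rw [← ibp_iter f (fun y => Pw k y * iteratedDeriv n f y) hf hsupp hgs d n hdn]
    congr 1; funext y; ring
  have habs : (∫ y, Pw k y * iteratedDeriv n f y ^ 2)
      ≤ |∫ y, iteratedDeriv d (fun y => Pw k y * iteratedDeriv n f y) y
          * iteratedDeriv (n-d) f y| := by
    rw [h1]
    calc (-1:ℝ)^d * ∫ y, iteratedDeriv d (fun y => Pw k y * iteratedDeriv n f y) y
          * iteratedDeriv (n-d) f y
        ≤ |(-1:ℝ)^d * ∫ y, iteratedDeriv d (fun y => Pw k y * iteratedDeriv n f y) y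
          * iteratedDeriv (n-d) f y| := le_abs_self _
      _ = _ := by rw [abs_mul, abs_pow, abs_neg, abs_one, one_pow, one_mul]
  -- step 2 : pointwise Leibniz estimate
  have hpt : ∀ y, |iteratedDeriv d (fun y => Pw k y * iteratedDeriv n f y) y
        * iteratedDeriv (n-d) f y|
      ≤ ∑ j ∈ Finset.range (d+1), 8 * 16 ^ k *
          (Pw k y * (|iteratedDeriv (n+d-j) f y| * |iteratedDeriv (n-d) f y|)) := by
    intro y
    rw [abs_mul]
    have hleib : |iteratedDeriv d (fun y => Pw k y * iteratedDeriv n f y) y|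
        ≤ ∑ j ∈ Finset.range (d+1), 8 * 16 ^ k * (Pw k y * |iteratedDeriv (n+d-j) f y|) := by
      calc |iteratedDeriv d (fun y => Pw k y * iteratedDeriv n f y) y|
          = ‖iteratedFDeriv ℝ d (fun y => Pw k y * iteratedDeriv n f y) y‖ := by
            rw [norm_iteratedFDeriv_eq_norm_iteratedDeriv, Real.norm_eq_abs]
        _ ≤ ∑ j ∈ Finset.range (d+1), (d.choose j : ℝ)
              * ‖iteratedFDeriv ℝ j (Pw k) y‖
              * ‖iteratedFDeriv ℝ (d-j) (iteratedDeriv n f) y‖ :=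
            norm_iteratedFDeriv_mul_le ((Pw_smooth k).of_le (by simp))
              (smooth_iter hf n) y (by exact_mod_cast le_top)
        _ ≤ ∑ j ∈ Finset.range (d+1), 8 * 16 ^ k * (Pw k y * |iteratedDeriv (n+d-j) f y|) := by
            apply Finset.sum_le_sum
            intro j hj
            have hjd : j ≤ d := by
              have := Finset.mem_range.mp hj; omega
            have hch : (d.choose j : ℝ) ≤ 8 := by
              have : d.choose j ≤ 8 := by interval_cases d <;> interval_cases j <;> norm_num
              exact_mod_cast this
            have hPj : ‖iteratedFDeriv ℝ j (Pw k) y‖ ≤ 16 ^ k * Pw k y := by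
              rw [norm_iteratedFDeriv_eq_norm_iteratedDeriv, Real.norm_eq_abs]
              exact Pw_ideriv_bound k j (by omega) y
            have hFeq : ‖iteratedFDeriv ℝ (d-j) (iteratedDeriv n f) y‖
                = |iteratedDeriv (n+d-j) f y| := by
              rw [norm_iteratedFDeriv_eq_norm_iteratedDeriv, Real.norm_eq_abs,
                ideriv_ideriv]
              congr 2
              omega
            rw [hFeq]
            calc (d.choose j : ℝ) * ‖iteratedFDeriv ℝ j (Pw k) y‖ * |iteratedDeriv (n+d-j) f y|
                ≤ 8 * (16 ^ k * Pw k y) * |iteratedDeriv (n+d-j) f y| := by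
                  exact mul_le_mul (mul_le_mul hch hPj (norm_nonneg _) (by norm_num))
                    le_rfl (abs_nonneg _) (by positivity)
              _ = 8 * 16 ^ k * (Pw k y * |iteratedDeriv (n+d-j) f y|) := by ring
    calc |iteratedDeriv d (fun y => Pw k y * iteratedDeriv n f y) y|
          * |iteratedDeriv (n-d) f y|
        ≤ (∑ j ∈ Finset.range (d+1), 8 * 16 ^ k * (Pw k y * |iteratedDeriv (n+d-j) f y|))
          * |iteratedDeriv (n-d) f y| :=
          mul_le_mul_of_nonneg_right hleib (abs_nonneg _)
      _ = ∑ j ∈ Finset.range (d+1), 8 * 16 ^ k *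
            (Pw k y * (|iteratedDeriv (n+d-j) f y| * |iteratedDeriv (n-d) f y|)) := by
          rw [Finset.sum_mul]; apply Finset.sum_congr rfl; intro j _; ring
  -- step 3 : integrate the pointwise bound
  have ileft : Integrable (fun y => |iteratedDeriv d (fun y => Pw k y * iteratedDeriv n f y) y
      * iteratedDeriv (n-d) f y|) := by
    apply Continuous.integrable_of_hasCompactSupport
    · exact ((hgs.continuous_iteratedDeriv d (by exact_mod_cast le_top)).mul
        ((smooth_iter hf (n-d)).continuous)).abs
    · exact ((hcs_iter hsupp (n-d)).mul_left).abs
  have isummand : ∀ j, Integrable (fun y => 8 * 16 ^ k *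
      (Pw k y * (|iteratedDeriv (n+d-j) f y| * |iteratedDeriv (n-d) f y|))) := by
    intro j
    have hre : (fun y => 8 * 16 ^ k *
        (Pw k y * (|iteratedDeriv (n+d-j) f y| * |iteratedDeriv (n-d) f y|)))
        = fun y => (8 * 16 ^ k * (Pw k y * |iteratedDeriv (n+d-j) f y|))
            * |iteratedDeriv (n-d) f y| := by
      funext y; ring
    rw [hre]
    apply Continuous.integrable_of_hasCompactSupport
    · exact ((continuous_const.mul (hPc.mul ((smooth_iter hf (n+d-j)).continuous).abs)).mul
        ((smooth_iter hf (n-d)).continuous).abs)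
    · exact HasCompactSupport.mul_left ((hcs_iter hsupp (n-d)).abs)
  have iright : Integrable (fun y => ∑ j ∈ Finset.range (d+1), 8 * 16 ^ k *
      (Pw k y * (|iteratedDeriv (n+d-j) f y| * |iteratedDeriv (n-d) f y|))) := by
    apply integrable_finset_sum
    intro j _
    exact isummand j
  have hint2 : |∫ y, iteratedDeriv d (fun y => Pw k y * iteratedDeriv n f y) y
        * iteratedDeriv (n-d) f y|
      ≤ ∫ y, ∑ j ∈ Finset.range (d+1), 8 * 16 ^ k *
          (Pw k y * (|iteratedDeriv (n+d-j) f y| * |iteratedDeriv (n-d) f y|)) := by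
    calc |∫ y, iteratedDeriv d (fun y => Pw k y * iteratedDeriv n f y) y
          * iteratedDeriv (n-d) f y|
        ≤ ∫ y, |iteratedDeriv d (fun y => Pw k y * iteratedDeriv n f y) y
          * iteratedDeriv (n-d) f y| := by
          have hni := norm_integral_le_integral_norm (μ := volume)
            (fun y => iteratedDeriv d (fun y => Pw k y * iteratedDeriv n f y) y
              * iteratedDeriv (n-d) f y)
          simpa only [Real.norm_eq_abs] using hni
      _ ≤ _ := integral_mono ileft iright hpt
  -- step 4 : Cauchy-Schwarz on each summand
  have hcsj : ∀ j, (∫ y, Pw k y * (|iteratedDeriv (n+d-j) f y| * |iteratedDeriv (n-d) f y|))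
      ≤ Real.sqrt (∫ y, Pw k y * iteratedDeriv (n+d-j) f y ^ 2)
        * Real.sqrt (∫ y, Pw k y * iteratedDeriv (n-d) f y ^ 2) := by
    intro j
    have hU : ∀ (m : ℕ), Continuous (fun y => Real.sqrt (Pw k y) * iteratedDeriv m f y) :=
      fun m => hsqc.mul ((smooth_iter hf m).continuous)
    have hUc : ∀ (m : ℕ), HasCompactSupport
        (fun y => Real.sqrt (Pw k y) * iteratedDeriv m f y) :=
      fun m => (hcs_iter hsupp m).mul_left
    have hsq : ∀ (m : ℕ) (y : ℝ),
        (Real.sqrt (Pw k y) * iteratedDeriv m f y) ^ 2 = Pw k y * iteratedDeriv m f y ^ 2 := by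
      intro m y
      rw [mul_pow, Real.sq_sqrt (le_of_lt (Pw_pos k y))]
    have habs2 : ∀ y, Pw k y * (|iteratedDeriv (n+d-j) f y| * |iteratedDeriv (n-d) f y|)
        = |(Real.sqrt (Pw k y) * iteratedDeriv (n+d-j) f y)
            * (Real.sqrt (Pw k y) * iteratedDeriv (n-d) f y)| := by
      intro y
      have hss : Real.sqrt (Pw k y) * Real.sqrt (Pw k y) = Pw k y :=
        Real.mul_self_sqrt (le_of_lt (Pw_pos k y))
      rw [abs_mul, abs_mul, abs_mul, abs_of_nonneg (Real.sqrt_nonneg _)]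
      conv_lhs => rw [← hss]
      ring
    calc (∫ y, Pw k y * (|iteratedDeriv (n+d-j) f y| * |iteratedDeriv (n-d) f y|))
        = ∫ y, |(Real.sqrt (Pw k y) * iteratedDeriv (n+d-j) f y)
            * (Real.sqrt (Pw k y) * iteratedDeriv (n-d) f y)| := by
          congr 1; funext y; rw [habs2 y]
      _ ≤ Real.sqrt (∫ y, (Real.sqrt (Pw k y) * iteratedDeriv (n+d-j) f y) ^ 2)
            * Real.sqrt (∫ y, (Real.sqrt (Pw k y) * iteratedDeriv (n-d) f y) ^ 2) :=
          cs_integral _ _ (hU _) (hU _) (hUc _) (hUc _)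
      _ = _ := by
          have hIeq : ∀ m : ℕ, (∫ y, (Real.sqrt (Pw k y) * iteratedDeriv m f y) ^ 2)
              = ∫ y, Pw k y * iteratedDeriv m f y ^ 2 := by
            intro m; congr 1; funext y; rw [hsq]
          rw [hIeq, hIeq]
  -- put everything together
  calc (∫ y, Pw k y * iteratedDeriv n f y ^ 2)
      ≤ ∫ y, ∑ j ∈ Finset.range (d+1), 8 * 16 ^ k *
          (Pw k y * (|iteratedDeriv (n+d-j) f y| * |iteratedDeriv (n-d) f y|)) :=
        le_trans habs hint2
    _ = ∑ j ∈ Finset.range (d+1), ∫ y, 8 * 16 ^ k *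
          (Pw k y * (|iteratedDeriv (n+d-j) f y| * |iteratedDeriv (n-d) f y|)) :=
        integral_finset_sum _ (fun j _ => isummand j)
    _ = ∑ j ∈ Finset.range (d+1), 8 * 16 ^ k *
          ∫ y, Pw k y * (|iteratedDeriv (n+d-j) f y| * |iteratedDeriv (n-d) f y|) := by
        apply Finset.sum_congr rfl; intro j _; rw [integral_const_mul]
    _ ≤ ∑ j ∈ Finset.range (d+1), 8 * 16 ^ k *
          (Real.sqrt (∫ y, Pw k y * iteratedDeriv (n+d-j) f y ^ 2) *
           Real.sqrt (∫ y, Pw k y * iteratedDeriv (n-d) f y ^ 2)) := by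
        apply Finset.sum_le_sum
        intro j _
        exact mul_le_mul_of_nonneg_left (hcsj j) (by positivity)

lemma term_eq (f : ℝ → ℝ) (k n : ℕ) :
    L2norm (fun y => (1 + y ^ 2) ^ ((k : ℝ) / 2) * iteratedDeriv n f y)
      = Real.sqrt (∫ y, Pw k y * iteratedDeriv n f y ^ 2) := by
  simp only [L2norm]
  congr 1
  congr 1
  funext y
  rw [mul_pow]
  congr 1
  have h0 : (0:ℝ) ≤ 1 + y ^ 2 := by positivity
  rw [← Real.rpow_natCast ((1 + y ^ 2) ^ ((k:ℝ)/2)) 2, ← Real.rpow_mul h0]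
  norm_num

lemma L2norm_nonneg (f : ℝ → ℝ) : 0 ≤ L2norm f := Real.sqrt_nonneg _

lemma sobNorm_nonneg (N K : ℕ) (f : ℝ → ℝ) : 0 ≤ sobNorm N K f :=
  Finset.sum_nonneg fun _ _ => Finset.sum_nonneg fun _ _ => L2norm_nonneg _

lemma term_le (f : ℝ → ℝ) (N K k n : ℕ) (hk : k ≤ K) (hn : n ≤ 2 * (K - k) + N) :
    Real.sqrt (∫ y, Pw k y * iteratedDeriv n f y ^ 2) ≤ sobNorm N K f := by
  rw [← term_eq]
  calc L2norm (fun y => (1 + y ^ 2) ^ ((k : ℝ) / 2) * iteratedDeriv n f y)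
      ≤ ∑ n' ∈ Finset.range (2 * (K - k) + N + 1),
          L2norm (fun y => (1 + y ^ 2) ^ ((k : ℝ) / 2) * iteratedDeriv n' f y) :=
        Finset.single_le_sum
          (f := fun n' => L2norm (fun y => (1 + y ^ 2) ^ ((k : ℝ) / 2) * iteratedDeriv n' f y))
          (fun i _ => L2norm_nonneg _) (Finset.mem_range.mpr (by omega))
    _ ≤ sobNorm N K f :=
        Finset.single_le_sum
          (f := fun k' => ∑ n' ∈ Finset.range (2 * (K - k') + N + 1),
            L2norm (fun y => (1 + y ^ 2) ^ ((k' : ℝ) / 2) * iteratedDeriv n' f y))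
          (fun i _ => Finset.sum_nonneg fun _ _ => L2norm_nonneg _)
          (Finset.mem_range.mpr (by omega))

/-- Interpolation in weighted Sobolev spaces: `‖f‖²_{H^{4,K}} ≲ ‖f‖_{H^{1,K}} ‖f‖_{H^{7,K}}`. -/
theorem weighted_sobolev_interpolation (K : ℕ) :
    ∃ C : ℝ, 0 < C ∧ ∀ f : ℝ → ℝ, ContDiff ℝ (⊤ : ℕ∞) f → HasCompactSupport f →
      (sobNorm 4 K f) ^ 2 ≤ C * (sobNorm 1 K f * sobNorm 7 K f) := by
  refine ⟨((K+1:ℝ) * (2*K+5)) ^ 2 * (32 * 16 ^ K), by positivity, ?_⟩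
  intro f hfω hsupp
  have hf : ContDiff ℝ (⊤:ℕ∞) f := hfω.of_le (by simp)
  set S1 := sobNorm 1 K f with hS1def
  set S7 := sobNorm 7 K f with hS7def
  have hS1 : 0 ≤ S1 := sobNorm_nonneg 1 K f
  have hS7 : 0 ≤ S7 := sobNorm_nonneg 7 K f
  have h16 : (1:ℝ) ≤ 16 ^ K := one_le_pow₀ (by norm_num)
  have hterm : ∀ k, k ≤ K → ∀ n, n ≤ 2 * (K - k) + 4 →
      L2norm (fun y => (1 + y ^ 2) ^ ((k : ℝ) / 2) * iteratedDeriv n f y)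
        ≤ Real.sqrt (32 * 16 ^ K * (S1 * S7)) := by
    intro k hk n hn
    rw [term_eq]
    apply Real.sqrt_le_sqrt
    have hInn : (0:ℝ) ≤ ∫ y, Pw k y * iteratedDeriv n f y ^ 2 :=
      integral_nonneg fun y => by positivity
    by_cases hsmall : n ≤ 2 * (K - k) + 1
    · have ha1 : Real.sqrt (∫ y, Pw k y * iteratedDeriv n f y ^ 2) ≤ S1 :=
        term_le f 1 K k n hk hsmall
      have ha7 : Real.sqrt (∫ y, Pw k y * iteratedDeriv n f y ^ 2) ≤ S7 :=
        term_le f 7 K k n hk (by omega)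
      calc (∫ y, Pw k y * iteratedDeriv n f y ^ 2)
          = Real.sqrt (∫ y, Pw k y * iteratedDeriv n f y ^ 2)
            * Real.sqrt (∫ y, Pw k y * iteratedDeriv n f y ^ 2) :=
            (Real.mul_self_sqrt hInn).symm
        _ ≤ S1 * S7 := mul_le_mul ha1 ha7 (Real.sqrt_nonneg _) hS1
        _ ≤ 32 * 16 ^ K * (S1 * S7) := by nlinarith [mul_nonneg hS1 hS7]
    · set d := n - (2 * (K - k) + 1) with hd
      have hd3 : d ≤ 3 := by omega
      have hdn : d ≤ n := by omega
      have hkey := key_est f hf hsupp k n d hd3 hdn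
      have h16k : (16:ℝ) ^ k ≤ 16 ^ K := pow_le_pow_right₀ (by norm_num) hk
      calc (∫ y, Pw k y * iteratedDeriv n f y ^ 2)
          ≤ ∑ j ∈ Finset.range (d+1), 8 * 16 ^ k *
              (Real.sqrt (∫ y, Pw k y * iteratedDeriv (n+d-j) f y ^ 2) *
               Real.sqrt (∫ y, Pw k y * iteratedDeriv (n-d) f y ^ 2)) := hkey
        _ ≤ ∑ _j ∈ Finset.range (d+1), 8 * 16 ^ K * (S7 * S1) := by
            apply Finset.sum_le_sum
            intro j _
            have hup : Real.sqrt (∫ y, Pw k y * iteratedDeriv (n+d-j) f y ^ 2) ≤ S7 :=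
              term_le f 7 K k (n+d-j) hk (by omega)
            have hlo : Real.sqrt (∫ y, Pw k y * iteratedDeriv (n-d) f y ^ 2) ≤ S1 :=
              term_le f 1 K k (n-d) hk (by omega)
            have hnn7 : (0:ℝ) ≤ Real.sqrt (∫ y, Pw k y * iteratedDeriv (n+d-j) f y ^ 2) :=
              Real.sqrt_nonneg _
            exact mul_le_mul (by nlinarith) (mul_le_mul hup hlo (Real.sqrt_nonneg _) hS7)
              (mul_nonneg hnn7 (Real.sqrt_nonneg _)) (by positivity)
        _ = ((d:ℝ)+1) * (8 * 16 ^ K * (S7 * S1)) := by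
            rw [Finset.sum_const, Finset.card_range, nsmul_eq_mul]
            push_cast; ring
        _ ≤ 32 * 16 ^ K * (S1 * S7) := by
            have hd4 : ((d:ℝ)+1) ≤ 4 := by
              have : (d:ℝ) ≤ 3 := by exact_mod_cast hd3
              linarith
            nlinarith [mul_nonneg hS1 hS7, mul_nonneg (mul_nonneg hS7 hS1) (by linarith : (0:ℝ) ≤ 16 ^ K),
              mul_nonneg hS7 hS1]
  have hsob4 : sobNorm 4 K f ≤ ((K+1:ℝ) * (2*K+5)) * Real.sqrt (32 * 16 ^ K * (S1 * S7)) := by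
    rw [sobNorm]
    calc ∑ k ∈ Finset.range (K+1), ∑ n ∈ Finset.range (2 * (K - k) + 4 + 1),
          L2norm (fun y => (1 + y ^ 2) ^ ((k : ℝ) / 2) * iteratedDeriv n f y)
        ≤ ∑ k ∈ Finset.range (K+1), ((2*K+5:ℝ)) * Real.sqrt (32 * 16 ^ K * (S1 * S7)) := by
          apply Finset.sum_le_sum
          intro k hk
          have hk' : k ≤ K := by have := Finset.mem_range.mp hk; omega
          calc ∑ n ∈ Finset.range (2 * (K - k) + 4 + 1),
                L2norm (fun y => (1 + y ^ 2) ^ ((k : ℝ) / 2) * iteratedDeriv n f y)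
              ≤ (2 * (K - k) + 4 + 1) • Real.sqrt (32 * 16 ^ K * (S1 * S7)) := by
                have hb := Finset.sum_le_card_nsmul (Finset.range (2 * (K - k) + 4 + 1))
                  (fun n => L2norm (fun y => (1 + y ^ 2) ^ ((k : ℝ) / 2) * iteratedDeriv n f y))
                  (Real.sqrt (32 * 16 ^ K * (S1 * S7)))
                  (fun n hn => hterm k hk' n (by have := Finset.mem_range.mp hn; omega))
                rwa [Finset.card_range] at hb
            _ ≤ (2*K+5:ℝ) * Real.sqrt (32 * 16 ^ K * (S1 * S7)) := by
                rw [nsmul_eq_mul]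
                apply mul_le_mul_of_nonneg_right _ (Real.sqrt_nonneg _)
                push_cast
                have : (K:ℝ) - (K - k : ℕ) ≥ 0 := by
                  have : (K - k : ℕ) ≤ K := Nat.sub_le _ _
                  have := (Nat.cast_le (α := ℝ)).mpr this
                  linarith
                have hKk : ((K - k : ℕ):ℝ) ≤ K := by
                  exact_mod_cast (Nat.cast_le (α := ℝ)).mpr (Nat.sub_le K k)
                linarith
      _ = ((K+1:ℝ) * (2*K+5)) * Real.sqrt (32 * 16 ^ K * (S1 * S7)) := by
          rw [Finset.sum_const, Finset.card_range, nsmul_eq_mul]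
          push_cast; ring
  have hnn : (0:ℝ) ≤ 32 * 16 ^ K * (S1 * S7) := by positivity
  calc (sobNorm 4 K f) ^ 2
      ≤ (((K+1:ℝ) * (2*K+5)) * Real.sqrt (32 * 16 ^ K * (S1 * S7))) ^ 2 := by
        apply pow_le_pow_left₀ (sobNorm_nonneg 4 K f) hsob4
    _ = ((K+1:ℝ) * (2*K+5)) ^ 2 * (32 * 16 ^ K * (S1 * S7)) := by
        rw [mul_pow, Real.sq_sqrt hnn]
    _ = ((K+1:ℝ) * (2*K+5)) ^ 2 * (32 * 16 ^ K) * (S1 * S7) := by ring
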